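/- arXiv:1909.03645 — 3 statements merged into one kernel-verified Lean document; each statement's English description precedes it below -/
import Mathlib

section
/- For λ in the cone Γ_{k-1} ⊂ ℝⁿ and any 0 ≤ ℓ ≤ k−2 and index i, one has σ_{ℓ-1}(λ|i)·σ_{k-1}(λ) − σ_ℓ(λ)·σ_{k-2}(λ|i) < 0 (with the convention σ_{-1} = 0, so the ℓ = 0 case reads −σ_{k-2}(λ|i) < 0). -/
/-- The m-th elementary symmetric polynomial of x ∈ ℝⁿ. -/
noncomputable def esymm (n m : ℕ) (x : Fin n → ℝ) : ℝ :=
  ∑ s ∈ Finset.powersetCard m (Finset.univ : Finset (Fin n)), ∏ i ∈ s, x i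

/-- The m-th elementary symmetric polynomial of x with the i-th coordinate deleted, σ_m(x|i). -/
noncomputable def esymmDel (n m : ℕ) (x : Fin n → ℝ) (i : Fin n) : ℝ :=
  ∑ s ∈ Finset.powersetCard m ((Finset.univ : Finset (Fin n)).erase i), ∏ j ∈ s, x j

/-- The Gårding cone Γ_k = {λ ∈ ℝⁿ : σ_j(λ) > 0 for 1 ≤ j ≤ k}. -/
def Gamma (n k : ℕ) : Set (Fin n → ℝ) :=
  {x | ∀ j : ℕ, 1 ≤ j → j ≤ k → 0 < esymm n j x}

/-!
Writing `σ_m(λ) = σ_m(λ|i) + λ_i σ_{m-1}(λ|i)`, the `λ_i`-terms cancel and the expression becomes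
`σ_{ℓ-1} σ_{k-1} - σ_ℓ σ_{k-2}` evaluated at `μ = λ|i`, which lies in `Γ_{k-2}`. On `Γ_{k-2}` the
ratios `σ_{j+1}(μ) / σ_j(μ)` decrease strictly by Newton's inequalities `E_j E_{j+2} ≤ E_{j+1}²`
for the means `E_j = σ_j / C(n, j)`. These are proved in the classical way: the roots of the
derivative of `∏ (X - μ_a)` are real and have the same means `E_j` for `j < n` (Rolle), which lowers
`n` down to `n = j + 2`; there `x ↦ x⁻¹` exchanges `E_j` with `E_{n-j}` and reduces the inequality
to `E_2 ≤ E_1²`, which is Cauchy–Schwarz.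
-/

theorem Nat.choose_mul_choose_add_two_lt_sq {n m : ℕ} (h : m + 2 ≤ n) :
    n.choose m * n.choose (m + 2) < n.choose (m + 1) ^ 2 := by
  have h1 := Nat.choose_succ_right_eq n m
  have h2 := Nat.choose_succ_right_eq n (m + 1)
  have hpos : 0 < n.choose (m + 1) := Nat.choose_pos (by omega)
  obtain ⟨d, rfl⟩ : ∃ d, n = m + 2 + d := ⟨n - (m + 2), by omega⟩
  rw [show m + 2 + d - m = d + 2 by omega] at h1
  rw [show m + 2 + d - (m + 1) = d + 1 by omega] at h2
  refine Nat.lt_of_mul_lt_mul_right (a := (d + 2) * (m + 2)) ?_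
  calc _ = ((m + 2 + d).choose m * (d + 2)) * ((m + 2 + d).choose (m + 2) * (m + 2)) := by ring
    _ = (m + 2 + d).choose (m + 1) ^ 2 * ((m + 1) * (d + 1)) := by rw [← h1, h2]; ring
    _ < _ := mul_lt_mul_of_pos_left (by nlinarith) (by positivity)

namespace Multiset

section CommSemiring

variable {R : Type*} [CommSemiring R]

@[simp]
theorem esymm_zero (s : Multiset R) : s.esymm 0 = 1 := by
  simp [esymm]

theorem esymm_cons_succ (a : R) (s : Multiset R) (j : ℕ) :
    (a ::ₘ s).esymm (j + 1) = s.esymm (j + 1) + a * s.esymm j := by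
  simp [esymm, powersetCard_cons, map_map, sum_map_mul_left]

theorem esymm_eq_zero_of_card_lt {s : Multiset R} {j : ℕ} (h : card s < j) : s.esymm j = 0 := by
  simp [esymm, powersetCard_eq_empty _ h]

theorem esymm_card (s : Multiset R) : s.esymm (card s) = s.prod := by
  induction s using Multiset.induction with
  | empty => simp
  | cons a s ih => simp [esymm_cons_succ, ih, esymm_eq_zero_of_card_lt]

theorem esymm_one (s : Multiset R) : s.esymm 1 = s.sum := by
  induction s using Multiset.induction with
  | empty => exact esymm_eq_zero_of_card_lt (by simp)
  | cons a s ih => simp [esymm_cons_succ, ih, add_comm]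

end CommSemiring

theorem two_mul_esymm_two {R : Type*} [CommRing R] (s : Multiset R) :
    2 * s.esymm 2 = s.sum ^ 2 - (s.map (· ^ 2)).sum := by
  induction s using Multiset.induction with
  | empty => rw [esymm_eq_zero_of_card_lt (by simp)]; simp
  | cons a s ih =>
    simp only [esymm_cons_succ, esymm_one, sum_cons, map_cons]
    linear_combination ih

theorem prod_mul_esymm_map_inv {K : Type*} [Field K] {s : Multiset K} (h0 : (0 : K) ∉ s)
    {i j : ℕ} (h : i + j = card s) : s.prod * (s.map (·⁻¹)).esymm j = s.esymm i := by
  induction s using Multiset.induction generalizing i j with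
  | empty =>
    obtain ⟨rfl, rfl⟩ : i = 0 ∧ j = 0 := by simpa using h
    simp
  | cons a s ih =>
    rw [mem_cons, not_or] at h0
    have ih' (i j : ℕ) (h : i + j = card s) := ih h0.2 h
    have ha : a * a⁻¹ = 1 := mul_inv_cancel₀ (Ne.symm h0.1)
    rw [card_cons] at h
    rcases j with _ | j
    · obtain rfl : i = card s + 1 := h
      simpa using (esymm_card (a ::ₘ s)).symm
    rw [map_cons, prod_cons, esymm_cons_succ]
    rcases i with _ | i
    · rw [esymm_eq_zero_of_card_lt (j := j + 1) (by rw [card_map]; omega), esymm_zero]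
      linear_combination (ih' 0 j (by omega)).trans s.esymm_zero
        + s.prod * (s.map (·⁻¹)).esymm j * ha
    · rw [esymm_cons_succ]
      linear_combination a * ih' i (j + 1) (by omega) + ih' (i + 1) j (by omega)
        + s.prod * (s.map (·⁻¹)).esymm j * ha

theorem sq_sum_le_card_mul_sum_sq (s : Multiset ℝ) :
    s.sum ^ 2 ≤ card s * (s.map (· ^ 2)).sum := by
  let f : Fin s.toList.length → ℝ := fun i => s.toList[(i : ℕ)]
  have hs : Finset.univ.val.map f = s := by
    rw [Fin.univ_val_map, List.ofFn_getElem, coe_toList]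
  rw [← hs, card_map, Finset.card_val, map_map, Finset.sum_map_val, Finset.sum_map_val]
  exact _root_.sq_sum_le_card_mul_sum_sq

noncomputable def esymmMean {K : Type*} [Field K] (s : Multiset K) (j : ℕ) : K :=
  s.esymm j / (card s).choose j

section Field

variable {K : Type*} [Field K]

theorem esymmMean_eq_zero_of_card_lt {s : Multiset K} {j : ℕ} (h : card s < j) :
    s.esymmMean j = 0 := by
  simp [esymmMean, esymm_eq_zero_of_card_lt h]

theorem esymmMean_card (s : Multiset K) : s.esymmMean (card s) = s.prod := by
  simp [esymmMean, esymm_card]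

theorem esymmMean_card_sub {s : Multiset K} (h0 : (0 : K) ∉ s) {j : ℕ} (hj : j ≤ card s) :
    s.esymmMean (card s - j) = s.prod * (s.map (·⁻¹)).esymmMean j := by
  rw [esymmMean, esymmMean, card_map, Nat.choose_symm hj,
    ← prod_mul_esymm_map_inv h0 (j := j) (by omega), mul_div_assoc]

end Field

theorem esymmMean_two_le_sq (s : Multiset ℝ) : s.esymmMean 2 ≤ s.esymmMean 1 ^ 2 := by
  rcases lt_or_ge (card s) 2 with hs | hs
  · rw [esymmMean_eq_zero_of_card_lt hs]; positivity
  have hcs := sq_sum_le_card_mul_sum_sq s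
  have h2 := two_mul_esymm_two s
  have hn : (2 : ℝ) ≤ card s := by exact_mod_cast hs
  rw [esymmMean, esymmMean, esymm_one, Nat.cast_choose_two, Nat.choose_one_right,
    div_pow, div_le_div_iff₀ (by nlinarith) (by positivity)]
  nlinarith

end Multiset

open Polynomial

namespace Polynomial

theorem card_roots_derivative_eq_natDegree {p : ℝ[X]} (hp : Multiset.card p.roots = p.natDegree) :
    Multiset.card (derivative p).roots = (derivative p).natDegree := by
  have := card_roots_le_derivative p
  have := card_roots' (derivative p)
  rw [natDegree_derivative] at *
  omega

theorem esymmMean_roots_derivative {p : ℝ[X]} (hp : Multiset.card p.roots = p.natDegree) {j : ℕ}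
    (hj : j < p.natDegree) : (derivative p).roots.esymmMean j = p.roots.esymmMean j := by
  obtain ⟨N, hN⟩ : ∃ N, p.natDegree = N + 1 := ⟨p.natDegree - 1, by omega⟩
  have hp' := card_roots_derivative_eq_natDegree hp
  have hdeg' : (derivative p).natDegree = N := by rw [natDegree_derivative, hN]; rfl
  have hlc : p.leadingCoeff ≠ 0 := leadingCoeff_ne_zero.2 (ne_zero_of_natDegree_gt hj)
  have key := coeff_derivative p (N - j)
  rw [coeff_eq_esymm_roots_of_card hp' (by omega), coeff_eq_esymm_roots_of_card hp (by omega),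
    leadingCoeff_derivative, hdeg', hN, show N - (N - j) = j by omega,
    show N + 1 - (N - j + 1) = j by omega] at key
  have hc : ((N.choose j * (N + 1) : ℕ) : ℝ) = ((N + 1).choose j * (N + 1 - j) : ℕ) := by
    rw [Nat.choose_mul_succ_eq]
  have hjN : j ≤ N := by omega
  push_cast [Nat.cast_sub hjN, Nat.cast_sub (hjN.trans N.le_succ)] at hc key
  have h1 : (N.choose j : ℝ) ≠ 0 := by exact_mod_cast (Nat.choose_pos (by omega)).ne'
  have h2 : ((N + 1).choose j : ℝ) ≠ 0 := by exact_mod_cast (Nat.choose_pos (by omega)).ne'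
  have h3 : (N : ℝ) + 1 - j ≠ 0 := by
    have : (j : ℝ) < N + 1 := by exact_mod_cast hN ▸ hj
    linarith
  have hsign : p.leadingCoeff * (-1) ^ j ≠ 0 := by simp [hlc]
  have hcoeff : ((N : ℝ) + 1) * (derivative p).roots.esymm j = (N + 1 - j) * p.roots.esymm j :=
    mul_left_cancel₀ hsign (by linear_combination key)
  unfold Multiset.esymmMean
  rw [hp', hdeg', hp, hN, div_eq_div_iff h1 h2]
  refine mul_right_cancel₀ h3 ?_
  linear_combination (-(derivative p).roots.esymm j) * hc + (N.choose j : ℝ) * hcoeff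

end Polynomial

namespace Multiset

theorem exists_esymmMean_eq (s : Multiset ℝ) (hs : s ≠ 0) :
    ∃ t : Multiset ℝ, card t + 1 = card s ∧ ∀ j < card s, t.esymmMean j = s.esymmMean j := by
  set p := (s.map (fun a => X - C a)).prod
  have hroots : p.roots = s := roots_multiset_prod_X_sub_C s
  have hdeg : p.natDegree = card s := natDegree_multiset_prod_X_sub_C_eq_card s
  have hp : card p.roots = p.natDegree := by rw [hroots, hdeg]
  refine ⟨(derivative p).roots, ?_, fun j hj => ?_⟩
  · rw [card_roots_derivative_eq_natDegree hp, natDegree_derivative, hdeg]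
    have := card_pos.2 hs
    omega
  · rw [esymmMean_roots_derivative hp (hdeg ▸ hj), hroots]

theorem esymmMean_mul_esymmMean_le_sq (s : Multiset ℝ) (m : ℕ) :
    s.esymmMean m * s.esymmMean (m + 2) ≤ s.esymmMean (m + 1) ^ 2 := by
  induction hn : card s generalizing s with
  | zero => rw [esymmMean_eq_zero_of_card_lt (j := m + 2) (by omega), mul_zero]; positivity
  | succ n ih =>
    rcases lt_trichotomy (m + 2) (n + 1) with hlt | heq | hgt
    · obtain ⟨t, ht, hts⟩ := exists_esymmMean_eq s (by rintro rfl; simp at hn)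
      rw [← hts m (by omega), ← hts (m + 1) (by omega), ← hts (m + 2) (by omega)]
      exact ih t (by omega)
    · have e0 : s.esymmMean (m + 2) = s.prod := by
        rw [show m + 2 = card s by omega, esymmMean_card]
      by_cases h0 : (0 : ℝ) ∈ s
      · rw [e0, prod_eq_zero h0, mul_zero]
        positivity
      have e1 : s.esymmMean (m + 1) = s.prod * (s.map (·⁻¹)).esymmMean 1 := by
        rw [show m + 1 = card s - 1 by omega]; exact esymmMean_card_sub h0 (by omega)
      have e2 : s.esymmMean m = s.prod * (s.map (·⁻¹)).esymmMean 2 := by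
        rw [show m = card s - 2 by omega]; exact esymmMean_card_sub h0 (by omega)
      rw [e0, e1, e2]
      linear_combination mul_le_mul_of_nonneg_left (esymmMean_two_le_sq (s.map (·⁻¹)))
        (sq_nonneg s.prod)
    · rw [esymmMean_eq_zero_of_card_lt (j := m + 2) (by omega), mul_zero]; positivity

theorem esymm_mul_esymm_lt_sq {s : Multiset ℝ} {m : ℕ} (h : 0 < s.esymm m * s.esymm (m + 2)) :
    s.esymm m * s.esymm (m + 2) < s.esymm (m + 1) ^ 2 := by
  have hm : m + 2 ≤ card s := by
    by_contra! hlt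
    rw [esymm_eq_zero_of_card_lt hlt, mul_zero] at h
    exact h.false
  have hnewton := esymmMean_mul_esymmMean_le_sq s m
  have hchoose :
      ((card s).choose m : ℝ) * (card s).choose (m + 2) < (card s).choose (m + 1) ^ 2 := by
    exact_mod_cast Nat.choose_mul_choose_add_two_lt_sq hm
  have h0 : (0 : ℝ) < (card s).choose m := by exact_mod_cast Nat.choose_pos (by omega)
  have h1 : (0 : ℝ) < (card s).choose (m + 1) := by exact_mod_cast Nat.choose_pos (by omega)
  have h2 : (0 : ℝ) < (card s).choose (m + 2) := by exact_mod_cast Nat.choose_pos hm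
  rw [esymmMean, esymmMean, esymmMean, div_mul_div_comm, div_pow,
    div_le_div_iff₀ (by positivity) (by positivity)] at hnewton
  nlinarith [mul_pos h h0, mul_pos h (sub_pos.2 hchoose), mul_pos h0 h2]

theorem esymm_mul_esymm_succ_lt_of_pos {s : Multiset ℝ} {p q : ℕ} (hpq : p < q)
    (h : ∀ j ≤ q + 1, 0 < s.esymm j) :
    s.esymm p * s.esymm (q + 1) < s.esymm (p + 1) * s.esymm q := by
  induction q, hpq using Nat.le_induction with
  | base => rw [← sq]; exact esymm_mul_esymm_lt_sq (mul_pos (h p (by omega)) (h (p + 2) le_rfl))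
  | succ q hpq ih =>
    have hnewton := esymm_mul_esymm_lt_sq (mul_pos (h q (by omega)) (h (q + 2) le_rfl))
    refine lt_of_mul_lt_mul_right (a := s.esymm q) ?_ (h q (by omega)).le
    calc s.esymm p * s.esymm (q + 1 + 1) * s.esymm q
        = s.esymm p * (s.esymm q * s.esymm (q + 2)) := by ring
      _ < s.esymm p * s.esymm (q + 1) ^ 2 := mul_lt_mul_of_pos_left hnewton (h p (by omega))
      _ = s.esymm p * s.esymm (q + 1) * s.esymm (q + 1) := by ring
      _ < s.esymm (p + 1) * s.esymm q * s.esymm (q + 1) :=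
        mul_lt_mul_of_pos_right (ih fun j hj => h j (by omega)) (h (q + 1) (by omega))
      _ = s.esymm (p + 1) * s.esymm (q + 1) * s.esymm q := by ring

theorem esymm_mul_esymm_succ_lt {s : Multiset ℝ} {p q : ℕ} (hpq : p < q)
    (h : ∀ j ≤ q, 0 < s.esymm j) :
    s.esymm p * s.esymm (q + 1) < s.esymm (p + 1) * s.esymm q := by
  rcases le_or_gt (s.esymm (q + 1)) 0 with hle | hpos
  · nlinarith [h p (by omega), h (p + 1) hpq, h q le_rfl]
  · refine esymm_mul_esymm_succ_lt_of_pos hpq fun j hj => ?_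
    rcases hj.lt_or_eq with hj | rfl
    exacts [h j (by omega), hpos]

theorem esymm_pos_of_cons {a : ℝ} {s : Multiset ℝ} {K j : ℕ}
    (h : ∀ i ≤ K, 0 < (a ::ₘ s).esymm i) (hj : j < K) : 0 < s.esymm j := by
  induction j with
  | zero => simp
  | succ j ih =>
    have e0 := ih (by omega)
    have h1 := h (j + 1) (by omega)
    have h2 := h (j + 2) (by omega)
    rw [esymm_cons_succ] at h1 h2
    -- if `σ_{j+1}(s) ≤ 0`, positivity on `a ::ₘ s` forces `σ_j σ_{j+2} > σ_{j+1}²`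
    by_contra! hneg
    have ha : 0 < a := by nlinarith
    have e2 : 0 < s.esymm (j + 2) := by nlinarith
    have hnewton := esymm_mul_esymm_lt_sq (mul_pos e0 e2)
    have : s.esymm (j + 1) ^ 2 < s.esymm (j + 1) ^ 2 :=
      calc s.esymm (j + 1) ^ 2 ≤ -s.esymm (j + 1) * (a * s.esymm j) := by nlinarith
        _ = s.esymm j * -(a * s.esymm (j + 1)) := by ring
        _ < s.esymm j * s.esymm (j + 2) := mul_lt_mul_of_pos_left (by linarith) e0
        _ < s.esymm (j + 1) ^ 2 := hnewton
    exact lt_irrefl _ this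

end Multiset

theorem esymm_eq_esymm_map (n m : ℕ) (x : Fin n → ℝ) :
    esymm n m x = ((Finset.univ : Finset (Fin n)).val.map x).esymm m :=
  (Finset.esymm_map_val x _ m).symm

theorem esymmDel_eq_esymm_map (n m : ℕ) (x : Fin n → ℝ) (i : Fin n) :
    esymmDel n m x i = (((Finset.univ : Finset (Fin n)).erase i).val.map x).esymm m :=
  (Finset.esymm_map_val x _ m).symm

theorem univ_val_map_eq_cons {n : ℕ} (x : Fin n → ℝ) (i : Fin n) :
    (Finset.univ : Finset (Fin n)).val.map x = x i ::ₘ ((Finset.univ.erase i).val.map x) := by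
  rw [Finset.erase_val, ← Multiset.map_cons, Multiset.cons_erase (Finset.mem_univ_val i)]

theorem stmt_5_general (n k : ℕ) (hk : 2 ≤ k) (x : Fin n → ℝ)
    (hx : x ∈ Gamma n (k-1)) (ℓ : ℕ) (hl : ℓ ≤ k - 2) (i : Fin n) :
    (if ℓ = 0 then (0:ℝ) else esymmDel n (ℓ-1) x i) * esymm n (k-1) x
      - esymm n ℓ x * esymmDel n (k-2) x i < 0 := by
  obtain ⟨K, rfl⟩ : ∃ K, k = K + 2 := ⟨k - 2, by omega⟩
  set μ := ((Finset.univ : Finset (Fin n)).erase i).val.map x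
  have hcons : ∀ m, esymm n m x = (x i ::ₘ μ).esymm m := fun m => by
    rw [esymm_eq_esymm_map, univ_val_map_eq_cons]
  have hdel : ∀ m, esymmDel n m x i = μ.esymm m := fun m => esymmDel_eq_esymm_map n m x i
  have hμ : ∀ j ≤ K, 0 < μ.esymm j := by
    refine fun j hj => Multiset.esymm_pos_of_cons (a := x i) (K := K + 1) (fun m hm => ?_)
      (by omega)
    rcases m with _ | m
    · simp
    · exact hcons (m + 1) ▸ hx (m + 1) (by omega) (by omega)
  simp only [show K + 2 - 1 = K + 1 by omega, Nat.add_sub_cancel, hcons, hdel]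
  rcases ℓ with _ | ℓ
  · simpa using hμ K le_rfl
  · simp only [Nat.add_sub_cancel, Nat.add_one_ne_zero, if_false, Multiset.esymm_cons_succ]
    linear_combination Multiset.esymm_mul_esymm_succ_lt (p := ℓ) (by omega) hμ

/-- for λ ∈ Γ_{k-1}, 0 ≤ ℓ ≤ k−2 and any index i,
σ_{ℓ-1}(λ|i)·σ_{k-1}(λ) − σ_ℓ(λ)·σ_{k-2}(λ|i) < 0, with the convention σ_{-1} = 0. -/
theorem stmt_5 (n k : ℕ) (hk : 2 ≤ k) (hkn : k ≤ n) (x : Fin n → ℝ)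
    (hx : x ∈ Gamma n (k-1)) (ℓ : ℕ) (hl : ℓ ≤ k - 2) (i : Fin n) :
    (if ℓ = 0 then (0:ℝ) else esymmDel n (ℓ-1) x i) * esymm n (k-1) x
      - esymm n ℓ x * esymmDel n (k-2) x i < 0 :=
  stmt_5_general n k hk x hx ℓ hl i
end

section
/- Let G_ℓ = −σ_ℓ/σ_{k-1} on Γ_{k-1} for 0 ≤ ℓ ≤ k−2, and suppose (−1/G_ℓ)^{1/(k-1-ℓ)} = (σ_{k-1}/σ_ℓ)^{1/(k-1-ℓ)} is concave on Γ_{k-1}. Then for any symmetric matrix X and λ ∈ Γ_{k-1}, −Σ G_ℓ^{ij,rs} X_{ij} X_{rs} ≥ −(1 + 1/(k−1−ℓ)) G_ℓ^{-1} (Σ G_ℓ^{ij} X_{ij})², where G_ℓ^{ij} and G_ℓ^{ij,rs} denote first and second derivatives of G_ℓ with respect to matrix entries. -/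
/-- σ_m of the eigenvalues of the matrix A, expressed via the characteristic polynomial:
σ_m(λ(A)) = (-1)^m · coeff_{n-m}(charpoly A). -/
noncomputable def symFn (n m : ℕ) (A : Fin n → Fin n → ℝ) : ℝ :=
  (-1 : ℝ)^m * ((Matrix.of A).charpoly.coeff (n - m))

/-- The operator G_ℓ(A) = −σ_ℓ(λ(A))/σ_{k-1}(λ(A)). -/
noncomputable def Gl (n k ℓ : ℕ) (A : Fin n → Fin n → ℝ) : ℝ :=
  -(symFn n ℓ A / symFn n (k-1) A)

open Polynomial in
lemma coord_contDiff (n : ℕ) (i j : Fin n) :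
    ContDiff ℝ (⊤ : ℕ∞) (fun A : Fin n → Fin n → ℝ => A i j) :=
  contDiff_pi.mp (contDiff_pi.mp contDiff_id i) j

lemma det_sub_contDiff (n : ℕ) (D : Matrix (Fin n) (Fin n) ℝ) :
    ContDiff ℝ (⊤ : ℕ∞) (fun A : Fin n → Fin n → ℝ => (D - Matrix.of A).det) := by
  have h : (fun A : Fin n → Fin n → ℝ => (D - Matrix.of A).det)
      = fun A => ∑ σ : Equiv.Perm (Fin n),
          ((Equiv.Perm.sign σ : ℤ) : ℝ) * ∏ i, (D (σ i) i - A (σ i) i) := by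
    funext A
    rw [Matrix.det_apply']
    rfl
  rw [h]
  refine ContDiff.sum fun σ _ => ContDiff.mul contDiff_const ?_
  exact contDiff_prod fun i _ => contDiff_const.sub (coord_contDiff n (σ i) i)


open Polynomial in
lemma charpoly_eval (n : ℕ) (A : Fin n → Fin n → ℝ) (x : ℝ) :
    ((Matrix.of A).charpoly.eval x) = (Matrix.diagonal (fun _ => x) - Matrix.of A).det := by
  rw [Matrix.charpoly, eval_det, matPolyEquiv_eval_eq_map]
  congr 1
  ext i j
  rw [Matrix.map_apply]
  by_cases h : i = j
  · subst h
    simp [Matrix.charmatrix_apply_eq]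
  · simp [Matrix.charmatrix_apply_ne _ _ _ h, Matrix.diagonal_apply_ne _ h]

lemma symFn_eq (n m : ℕ) (A : Fin n → Fin n → ℝ) :
    symFn n m A = (-1:ℝ)^m * ∑ i : Fin (n+1),
      (Matrix.diagonal (fun _ => ((i:ℕ):ℝ)) - Matrix.of A).det
        * (Lagrange.basis Finset.univ (fun i : Fin (n+1) => ((i:ℕ):ℝ)) i).coeff (n - m) := by
  classical
  set v : Fin (n+1) → ℝ := fun i => ((i:ℕ):ℝ) with hv
  have hinj : Set.InjOn v (Finset.univ : Finset (Fin (n+1))) := by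
    intro a _ b _ h
    have : (a:ℕ) = (b:ℕ) := Nat.cast_injective h
    exact Fin.ext this
  have hdeg : (Matrix.of A).charpoly.degree < (Finset.univ : Finset (Fin (n+1))).card := by
    rw [Matrix.charpoly_degree_eq_dim, Finset.card_univ, Fintype.card_fin, Fintype.card_fin]
    exact_mod_cast Nat.lt_succ_self n
  have key := Lagrange.eq_interpolate hinj hdeg
  rw [symFn]
  conv_lhs => rw [key]
  rw [Lagrange.interpolate_apply, Polynomial.finset_sum_coeff]
  congr 1
  refine Finset.sum_congr rfl fun i _ => ?_
  rw [Polynomial.coeff_C_mul, charpoly_eval]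

lemma symFn_contDiff (n m : ℕ) : ContDiff ℝ (⊤ : ℕ∞) (symFn n m) := by
  have h : symFn n m = fun A => (-1:ℝ)^m * ∑ i : Fin (n+1),
      (Matrix.diagonal (fun _ => ((i:ℕ):ℝ)) - Matrix.of A).det
        * (Lagrange.basis Finset.univ (fun i : Fin (n+1) => ((i:ℕ):ℝ)) i).coeff (n - m) :=
    funext (symFn_eq n m)
  rw [h]
  exact contDiff_const.mul (ContDiff.sum fun i _ =>
    (det_sub_contDiff n _).mul contDiff_const)

lemma symFn_zero (n : ℕ) (A : Fin n → Fin n → ℝ) : symFn n 0 A = 1 := by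
  rw [symFn]
  rw [pow_zero, one_mul, Nat.sub_zero]
  have h2 : (Matrix.of A).charpoly.natDegree = n := by
    rw [Matrix.charpoly_natDegree_eq_dim, Fintype.card_fin]
  have := (Matrix.charpoly_monic (Matrix.of A)).coeff_natDegree
  rwa [h2] at this


lemma deriv_nonpos_of_antitoneOn {g : ℝ → ℝ} {ε : ℝ} (hε : 0 < ε)
    (hg : AntitoneOn g (Set.Ioo (-ε) ε)) (hd : DifferentiableAt ℝ g 0) :
    deriv g 0 ≤ 0 := by
  have h := hd.hasDerivAt
  rw [hasDerivAt_iff_tendsto_slope] at h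
  have h' : Filter.Tendsto (slope g 0) (nhdsWithin 0 (Set.Ioi 0)) (nhds (deriv g 0)) :=
    h.mono_left (nhdsWithin_mono 0 (fun x hx => ne_of_gt hx))
  refine le_of_tendsto h' ?_
  filter_upwards [Ioo_mem_nhdsGT_of_mem (Set.mem_Ico.mpr ⟨le_refl (0:ℝ), hε⟩)] with t ht
  have h0 : (0:ℝ) ∈ Set.Ioo (-ε) ε := ⟨by linarith, hε⟩
  have htI : t ∈ Set.Ioo (-ε) ε := ⟨by linarith [ht.1], ht.2⟩
  have hle := hg h0 htI (le_of_lt ht.1)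
  rw [slope_def_field]
  have ht0 : 0 < t - 0 := by simpa using ht.1
  exact div_nonpos_of_nonpos_of_nonneg (by linarith) (by linarith)

set_option maxHeartbeats 1000000 in
/-- if (σ_{k-1}/σ_ℓ)^{1/(k-1-ℓ)} is concave on the set of symmetric matrices
with eigenvalues in Γ_{k-1}, then for any symmetric X and any A in that set,
−G_ℓ''(A)[X,X] ≥ −(1 + 1/(k−1−ℓ)) · G_ℓ(A)⁻¹ · (G_ℓ'(A)[X])². -/
theorem stmt_8 (n k ℓ : ℕ) (hk : 2 ≤ k) (hkn : k ≤ n) (hl : ℓ ≤ k - 2)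
    (S : Set (Fin n → Fin n → ℝ))
    (hS : S = {A | (Matrix.of A).IsSymm ∧ ∀ j : ℕ, 1 ≤ j → j ≤ k - 1 → 0 < symFn n j A})
    (hconc : ConcaveOn ℝ S
      (fun A => (symFn n (k-1) A / symFn n ℓ A) ^ ((1:ℝ)/((k:ℝ)-1-(ℓ:ℝ)))))
    (A : Fin n → Fin n → ℝ) (hA : A ∈ S)
    (X : Fin n → Fin n → ℝ) (hX : (Matrix.of X).IsSymm) :
    -(1 + 1/((k:ℝ)-1-(ℓ:ℝ))) * (Gl n k ℓ A)⁻¹ * (fderiv ℝ (Gl n k ℓ) A X)^2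
      ≤ -(fderiv ℝ (fun B => fderiv ℝ (Gl n k ℓ) B X) A X) := by
  classical
  -- basic scalars
  set c : ℝ := (1:ℝ)/((k:ℝ)-1-(ℓ:ℝ)) with hcdef
  have hp1 : (1:ℝ) ≤ (k:ℝ)-1-(ℓ:ℝ) := by
    have h1 : (ℓ:ℝ) ≤ ((k - 2 : ℕ) : ℝ) := Nat.cast_le.mpr hl
    have h2 : ((k - 2 : ℕ) : ℝ) = (k:ℝ) - 2 := by
      have : ((k - 2 : ℕ) : ℝ) = ((k:ℕ):ℝ) - ((2:ℕ):ℝ) := Nat.cast_sub hk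
      simpa using this
    rw [h2] at h1; linarith
  have hppos : (0:ℝ) < (k:ℝ)-1-(ℓ:ℝ) := by linarith
  have hc0 : 0 < c := by rw [hcdef]; positivity
  have hc1 : c ≤ 1 := by rw [hcdef]; rw [div_le_one hppos]; linarith
  -- membership facts
  have hAS := hA
  rw [hS] at hAS
  obtain ⟨hAsym, hApos⟩ := hAS
  have hk1 : 1 ≤ k - 1 := by omega
  have hQpos : ∀ B : Fin n → Fin n → ℝ,
      (∀ j : ℕ, 1 ≤ j → j ≤ k - 1 → 0 < symFn n j B) → 0 < symFn n ℓ B := by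
    intro B hB
    rcases Nat.eq_zero_or_pos ℓ with h0 | h0
    · rw [h0, symFn_zero]; norm_num
    · exact hB ℓ h0 (by omega)
  -- the line
  set μ : ℝ → (Fin n → Fin n → ℝ) := fun t => A + t • X with hμdef
  have hμ0 : μ 0 = A := by simp [hμdef]
  have hμcont : Continuous μ := by
    exact continuous_const.add (continuous_id.smul continuous_const)
  have hμsmooth : ContDiff ℝ (⊤ : ℕ∞) μ := contDiff_const.add (contDiff_id.smul contDiff_const)
  have hμderiv : ∀ t : ℝ, HasDerivAt μ X t := by
    intro t
    have h := ((hasDerivAt_id t).smul_const X).const_add A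
    simpa [hμdef] using h
  -- the open interval
  set T : Set ℝ := {t | ∀ j ∈ Finset.Icc 1 (k-1), 0 < symFn n j (μ t)} with hTdef
  have hTopen : IsOpen T := by
    have : T = ⋂ j ∈ Finset.Icc 1 (k-1), {t | 0 < symFn n j (μ t)} := by
      ext t; simp [hTdef]
    rw [this]
    exact isOpen_biInter_finset fun j _ =>
      isOpen_lt continuous_const (((symFn_contDiff n j).continuous).comp hμcont)
  have hT0 : (0:ℝ) ∈ T := by
    intro j hj
    rw [Finset.mem_Icc] at hj
    rw [hμ0]
    exact hApos j hj.1 hj.2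
  obtain ⟨ε, hε, hball⟩ := Metric.isOpen_iff.mp hTopen 0 hT0
  set I : Set ℝ := Set.Ioo (-ε) ε with hIdef
  have hI0 : (0:ℝ) ∈ I := ⟨by linarith, hε⟩
  have hInhds : I ∈ nhds (0:ℝ) := Ioo_mem_nhds (by linarith) hε
  have hIT : I ⊆ T := by
    intro t ht
    apply hball
    rw [Metric.mem_ball, Real.dist_eq, sub_zero, abs_lt]
    exact ⟨ht.1, ht.2⟩
  have hPpos : ∀ t ∈ I, 0 < symFn n (k-1) (μ t) := by
    intro t ht
    exact hIT ht (k-1) (Finset.mem_Icc.mpr ⟨hk1, le_refl _⟩)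
  have hQposI : ∀ t ∈ I, 0 < symFn n ℓ (μ t) := by
    intro t ht
    apply hQpos
    intro j hj1 hj2
    exact hIT ht j (Finset.mem_Icc.mpr ⟨hj1, hj2⟩)
  have hμS : ∀ t ∈ I, μ t ∈ S := by
    intro t ht
    rw [hS]
    constructor
    · show (Matrix.of (A + t • X)).IsSymm
      have : Matrix.of (A + t • X) = Matrix.of A + t • Matrix.of X := rfl
      rw [this, Matrix.IsSymm, Matrix.transpose_add, Matrix.transpose_smul, hAsym, hX]
    · intro j hj1 hj2
      exact hIT ht j (Finset.mem_Icc.mpr ⟨hj1, hj2⟩)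
  -- 1-d functions
  set P : ℝ → ℝ := fun t => symFn n (k-1) (μ t) with hPdef
  set Q : ℝ → ℝ := fun t => symFn n ℓ (μ t) with hQdef
  set v : ℝ → ℝ := fun t => P t / Q t with hvdef
  have hPsm : ContDiff ℝ (⊤ : ℕ∞) P := (symFn_contDiff n (k-1)).comp hμsmooth
  have hQsm : ContDiff ℝ (⊤ : ℕ∞) Q := (symFn_contDiff n ℓ).comp hμsmooth
  have hP'sm : ContDiff ℝ (⊤:ℕ∞) (deriv P) :=
    (contDiff_infty_iff_deriv.mp (hPsm.of_le (mod_cast le_top))).2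
  have hQ'sm : ContDiff ℝ (⊤:ℕ∞) (deriv Q) :=
    (contDiff_infty_iff_deriv.mp (hQsm.of_le (mod_cast le_top))).2
  have hvpos : ∀ t ∈ I, 0 < v t := fun t ht => div_pos (hPpos t ht) (hQposI t ht)
  set v' : ℝ → ℝ := deriv v with hv'def
  have hvd : ∀ t ∈ I, HasDerivAt v (v' t) t := by
    intro t ht
    have h := ((hPsm.differentiable (by simp) t).hasDerivAt.div
      (hQsm.differentiable (by simp) t).hasDerivAt (ne_of_gt (hQposI t ht)))
    exact h.differentiableAt.hasDerivAt
  have hv'eq : ∀ t ∈ I, v' t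
      = (deriv P t * Q t - P t * deriv Q t) / (Q t)^2 := by
    intro t ht
    have h := ((hPsm.differentiable (by simp) t).hasDerivAt.div
      (hQsm.differentiable (by simp) t).hasDerivAt (ne_of_gt (hQposI t ht)))
    exact h.deriv
  have hv'diff : DifferentiableAt ℝ v' 0 := by
    have hF : DifferentiableAt ℝ
        (fun t => (deriv P t * Q t - P t * deriv Q t) / (Q t)^2) 0 := by
      apply DifferentiableAt.div
      · exact ((hP'sm.differentiable (by simp) 0).mul (hQsm.differentiable (by simp) 0)).sub
          ((hPsm.differentiable (by simp) 0).mul (hQ'sm.differentiable (by simp) 0))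
      · exact (hQsm.differentiable (by simp) 0).pow 2
      · exact pow_ne_zero 2 (ne_of_gt (hQposI 0 hI0))
    apply hF.congr_of_eventuallyEq
    filter_upwards [hInhds] with t ht using hv'eq t ht
  set v0 : ℝ := v 0 with hv0def
  set v1 : ℝ := v' 0 with hv1def
  set v2 : ℝ := deriv v' 0 with hv2def
  have hv0pos : 0 < v0 := hvpos 0 hI0
  have hv'has : HasDerivAt v' v2 0 := hv'diff.hasDerivAt
  have hv0has : HasDerivAt v v1 0 := hvd 0 hI0
  -- ψ : Gl along the line
  set ψ : ℝ → ℝ := fun t => Gl n k ℓ (μ t) with hψdef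
  have hGlsm : ∀ t ∈ I, ContDiffAt ℝ (⊤ : ℕ∞) (Gl n k ℓ) (μ t) := by
    intro t ht
    exact (((symFn_contDiff n ℓ).contDiffAt.div (symFn_contDiff n (k-1)).contDiffAt
      (ne_of_gt (hPpos t ht))).neg : ContDiffAt ℝ (⊤ : ℕ∞) _ _)
  have hψd : ∀ t ∈ I, HasDerivAt ψ (fderiv ℝ (Gl n k ℓ) (μ t) X) t := by
    intro t ht
    exact (((hGlsm t ht).differentiableAt (by simp)).hasFDerivAt).comp_hasDerivAt t (hμderiv t)
  -- first derivative identification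
  have hψ1 : deriv ψ 0 = fderiv ℝ (Gl n k ℓ) A X := by
    have := (hψd 0 hI0).deriv
    rwa [hμ0] at this
  -- second derivative identification
  set H : (Fin n → Fin n → ℝ) → ℝ := fun B => fderiv ℝ (Gl n k ℓ) B X with hHdef
  have hHsm : ContDiffAt ℝ (⊤ : ℕ∞) H A := by
    have h1 : ContDiffAt ℝ (⊤ : ℕ∞) (fderiv ℝ (Gl n k ℓ)) A := by
      have := hGlsm 0 hI0
      rw [hμ0] at this
      exact this.fderiv_right (le_refl _)
    exact (ContinuousLinearMap.apply ℝ ℝ X).contDiff.comp_contDiffAt A h1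
  have hψ'eq : deriv ψ =ᶠ[nhds 0] fun t => H (μ t) := by
    filter_upwards [hInhds] with t ht using (hψd t ht).deriv
  have hψ2 : deriv (deriv ψ) 0 = fderiv ℝ H A X := by
    rw [hψ'eq.deriv_eq]
    have hd : HasDerivAt (fun t => H (μ t)) (fderiv ℝ H A X) 0 := by
      have hf : HasFDerivAt H (fderiv ℝ H A) (μ 0) := by
        rw [hμ0]
        exact (hHsm.differentiableAt (by simp)).hasFDerivAt
      exact hf.comp_hasDerivAt 0 (hμderiv 0)
    exact hd.deriv
  -- ψ in terms of v
  have hψv : ψ =ᶠ[nhds 0] fun t => -(v t)⁻¹ := by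
    filter_upwards [hInhds] with t ht
    show -(Q t / P t) = -(v t)⁻¹
    rw [hvdef]
    rw [inv_div]
  have hψ'v : deriv ψ =ᶠ[nhds 0] fun t => v' t / (v t)^2 := by
    refine hψv.deriv.trans ?_
    filter_upwards [hInhds] with t ht
    have h := ((hvd t ht).inv (ne_of_gt (hvpos t ht))).neg
    have : deriv (fun t => -(v t)⁻¹) t = -(-v' t / v t ^ 2) := h.deriv
    rw [this]; ring
  have hψ1v : deriv ψ 0 = v1 / v0^2 := hψ'v.self_of_nhds
  have hψ2v : deriv (deriv ψ) 0
      = (v2 * v0^2 - v1 * (2 * v0^1 * v1)) / (v0^2)^2 := by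
    rw [hψ'v.deriv_eq]
    exact (hv'has.div (hv0has.pow 2) (pow_ne_zero 2 (ne_of_gt hv0pos))).deriv
  -- φ concavity
  set φ : ℝ → ℝ := fun t => v t ^ c with hφdef
  have hφconc : ConcaveOn ℝ I φ := by
    have hmap : ∀ t : ℝ, (AffineMap.lineMap A (A + X) : ℝ →ᵃ[ℝ] (Fin n → Fin n → ℝ)) t = μ t := by
      intro t
      simp [AffineMap.lineMap_apply, hμdef]
      module
    have h := hconc.comp_affineMap (AffineMap.lineMap A (A + X) : ℝ →ᵃ[ℝ] (Fin n → Fin n → ℝ))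
    have heq : (fun A => (symFn n (k-1) A / symFn n ℓ A) ^ ((1:ℝ)/((k:ℝ)-1-(ℓ:ℝ))))
        ∘ (AffineMap.lineMap A (A + X) : ℝ →ᵃ[ℝ] (Fin n → Fin n → ℝ)) = φ := by
      funext t
      simp only [Function.comp_apply, hmap t, hφdef]
      rfl
    rw [heq] at h
    refine h.subset ?_ (convex_Ioo _ _)
    intro t ht
    simp only [Set.mem_preimage, hmap t]
    exact hμS t ht
  have hφd : ∀ t ∈ I, HasDerivAt φ (v' t * c * v t ^ (c - 1)) t := by
    intro t ht
    exact (hvd t ht).rpow_const (Or.inl (ne_of_gt (hvpos t ht)))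
  have hφ'eq : deriv φ =ᶠ[nhds 0] fun t => v' t * c * v t ^ (c - 1) := by
    filter_upwards [hInhds] with t ht using (hφd t ht).deriv
  have hGhas : HasDerivAt (fun t => v' t * c * v t ^ (c - 1))
      (v2 * c * v0 ^ (c-1) + v1 * c * (v1 * (c-1) * v0 ^ (c-1-1))) 0 := by
    have h1 : HasDerivAt (fun t => v' t * c) (v2 * c) 0 := hv'has.mul_const c
    have h2 : HasDerivAt (fun t => v t ^ (c-1)) (v1 * (c-1) * v0 ^ (c-1-1)) 0 :=
      hv0has.rpow_const (Or.inl (ne_of_gt hv0pos))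
    have := h1.mul h2
    convert this using 1
    try ring
    all_goals rfl
  have hφ'' : deriv (deriv φ) 0
      = v2 * c * v0 ^ (c-1) + v1 * c * (v1 * (c-1) * v0 ^ (c-1-1)) := by
    rw [hφ'eq.deriv_eq]
    exact hGhas.deriv
  -- antitone derivative
  have hφanti : AntitoneOn (deriv φ) I := by
    have hneg : ConvexOn ℝ I (fun t => -φ t) := hφconc.neg
    have hdiff : ∀ t ∈ I, DifferentiableAt ℝ (fun t => -φ t) t := by
      intro t ht
      exact ((hφd t ht).differentiableAt).neg
    have hmono := hneg.monotoneOn_deriv hdiff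
    intro x hx y hy hxy
    have := hmono hx hy hxy
    rw [deriv.fun_neg, deriv.fun_neg] at this
    linarith
  have hφ''nonpos : deriv (deriv φ) 0 ≤ 0 := by
    apply deriv_nonpos_of_antitoneOn hε hφanti
    apply (hGhas.differentiableAt).congr_of_eventuallyEq
    exact hφ'eq
  -- the key inequality on v2
  have hkey : v2 * v0 ≤ (1 - c) * v1^2 := by
    rw [hφ''] at hφ''nonpos
    have hw : (0:ℝ) < v0 ^ (c-1) := Real.rpow_pos_of_pos hv0pos _
    have hw2 : v0 ^ (c-1-1) = v0 ^ (c-1) / v0 := by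
      rw [← Real.rpow_sub_one (ne_of_gt hv0pos)]
    rw [hw2] at hφ''nonpos
    have h3 : (v2 * v0 - (1-c) * v1^2) * (c * v0 ^ (c-1) / v0) ≤ 0 := by
      have : (v2 * v0 - (1-c) * v1^2) * (c * v0 ^ (c-1) / v0)
          = v2 * c * v0 ^ (c-1) + v1 * c * (v1 * (c-1) * (v0 ^ (c-1) / v0)) := by
        field_simp
        ring
      rw [this]
      exact hφ''nonpos
    have h4 : 0 < c * v0 ^ (c-1) / v0 := by positivity
    nlinarith [mul_pos h4 (mul_pos h4 h4)]
  -- final computation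
  rw [← hψ1, ← hψ2, hψ1v, hψ2v]
  have hGlA : (Gl n k ℓ A)⁻¹ = -v0 := by
    have h : Gl n k ℓ A = -(Q 0 / P 0) := by
      simp only [Gl, hQdef, hPdef, hμ0]
    rw [h, inv_neg, inv_div]
  rw [hGlA]
  have hv0ne : v0 ≠ 0 := ne_of_gt hv0pos
  rw [div_pow]
  have h4 : (0:ℝ) < (v0^2)^2 := by positivity
  rw [show -(1 + c) * -v0 * (v1^2/(v0^2)^2) = ((1+c)*v0*v1^2) / ((v0^2)^2) from by ring,
    show -((v2 * v0 ^ 2 - v1 * (2 * v0 ^ 1 * v1)) / (v0 ^ 2) ^ 2)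
      = (v1 * (2 * v0 ^ 1 * v1) - v2 * v0 ^ 2) / ((v0^2)^2) from by ring,
    div_le_div_iff_of_pos_right h4]
  nlinarith [mul_le_mul_of_nonneg_right hkey hv0pos.le]
end

section
/- For λ ∈ Γ_{k-1} ⊂ ℝⁿ with 2 ≤ k ≤ n, assuming the Newton–Maclaurin inequalities σ_k σ_{k-2}/σ_{k-1}² ≤ ((k−1)/k)·((n−k+1)/(n−k+2)) and σ_{k-1}σ_{ℓ-1}/(σ_ℓ σ_{k-2}) ≤ (n−k+2)/(n−ℓ+1) for 1 ≤ ℓ ≤ k−2, the trace sum Σ_i G^{ii} of the linearized operator G = σ_k/σ_{k-1} − Σ_{ℓ=0}^{k-2} α_ℓ σ_ℓ/σ_{k-1} with α_ℓ ≥ 0 satisfies Σ_{i=1}^n G^{ii} ≥ (n−k+1)/k. -/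
open Finset

theorem Finset.sum_powersetCard_succ_sum_erase {α M : Type*} [Fintype α] [DecidableEq α]
    [AddCommMonoid M] (m : ℕ) (f : Finset α → M) :
    ∑ s ∈ powersetCard (m + 1) univ, ∑ j ∈ s, f (s.erase j)
      = (Fintype.card α - m) • ∑ t ∈ powersetCard m univ, f t := by
  calc ∑ s ∈ powersetCard (m + 1) univ, ∑ j ∈ s, f (s.erase j)
      = ∑ t ∈ powersetCard m univ, ∑ _j ∈ univ \ t, f t := by
        rw [sum_sigma', sum_sigma']
        refine sum_nbij' (fun p => ⟨p.1.erase p.2, p.2⟩) (fun p => ⟨insert p.2 p.1, p.2⟩)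
          ?_ ?_ ?_ ?_ fun _ _ => rfl
        · rintro ⟨s, j⟩ hp
          simp only [mem_sigma, mem_powersetCard_univ] at hp ⊢
          simp [card_erase_of_mem hp.2, hp.1]
        · rintro ⟨t, j⟩ hp
          simp only [mem_sigma, mem_powersetCard_univ, mem_sdiff] at hp ⊢
          simp [card_insert_of_notMem hp.2.2, hp.1]
        · rintro ⟨s, j⟩ hp
          simp only [mem_sigma] at hp
          simp [insert_erase hp.2]
        · rintro ⟨t, j⟩ hp
          simp only [mem_sigma, mem_sdiff] at hp
          simp [erase_insert hp.2.2]
    _ = (Fintype.card α - m) • ∑ t ∈ powersetCard m univ, f t := by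
        rw [smul_sum]
        refine sum_congr rfl fun t ht => ?_
        rw [sum_const, card_univ_sdiff, (mem_powersetCard_univ.1 ht)]

theorem sum_apply_pi_single_one {ι R M F : Type*} [Fintype ι] [DecidableEq ι] [Semiring R]
    [AddCommMonoid M] [FunLike F (ι → R) M] [AddMonoidHomClass F (ι → R) M] (L : F) :
    ∑ i, L (Pi.single i 1) = L 1 := by
  rw [← map_sum, ← Finset.univ_sum_single (1 : ι → R)]
  rfl

theorem HasLineDerivAt.div {𝕜 E : Type*} [NontriviallyNormedField 𝕜] [NormedAddCommGroup E]
    [NormedSpace 𝕜 E] {f g : E → 𝕜} {f' g' : 𝕜} {x v : E} (hf : HasLineDerivAt 𝕜 f f' x v)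
    (hg : HasLineDerivAt 𝕜 g g' x v) (hx : g x ≠ 0) :
    HasLineDerivAt 𝕜 (fun y => f y / g y) ((f' * g x - f x * g') / g x ^ 2) x v := by
  simpa [HasLineDerivAt] using HasDerivAt.fun_div hf hg (by simpa using hx)

theorem esymm_zero (n : ℕ) (x : Fin n → ℝ) : esymm n 0 x = 1 := by
  simp [esymm]

theorem esymm_pos_of_mem_Gamma {n p m : ℕ} {x : Fin n → ℝ} (hx : x ∈ Gamma n p) (hm : m ≤ p) :
    0 < esymm n m x := by
  rcases Nat.eq_zero_or_pos m with rfl | hm0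
  · simp [esymm_zero]
  · exact hx m hm0 hm

@[fun_prop]
theorem differentiable_esymm (n m : ℕ) : Differentiable ℝ (esymm n m) := by
  unfold esymm
  fun_prop

theorem hasLineDerivAt_esymm_zero (n : ℕ) (x v : Fin n → ℝ) :
    HasLineDerivAt ℝ (esymm n 0) 0 x v := by
  simpa [HasLineDerivAt, esymm_zero] using hasDerivAt_const (0 : ℝ) (1 : ℝ)

theorem hasLineDerivAt_esymm_succ (n m : ℕ) (x : Fin n → ℝ) :
    HasLineDerivAt ℝ (esymm n (m + 1)) ((n - m : ℕ) * esymm n m x) x 1 := by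
  classical
  have hline : ∀ i, HasDerivAt (fun t : ℝ => (x + t • 1) i) 1 0 := fun i => by
    simpa using (hasDerivAt_id (0 : ℝ)).const_add (x i)
  have hσ := HasDerivAt.fun_sum fun (s : Finset (Fin n)) (_ : s ∈ powersetCard (m + 1) univ) =>
    HasDerivAt.fun_finsetProd fun i (_ : i ∈ s) => hline i
  simp only [zero_smul, add_zero, smul_eq_mul, mul_one] at hσ
  rwa [sum_powersetCard_succ_sum_erase m (fun t => ∏ i ∈ t, x i), Fintype.card_fin,
    nsmul_eq_mul] at hσ

theorem le_lineDeriv_esymm_div {n k : ℕ} {x : Fin n → ℝ} (hk : 2 ≤ k) (hkn : k ≤ n)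
    (hx : x ∈ Gamma n (k - 1))
    (hNM : esymm n k x * esymm n (k - 2) x / esymm n (k - 1) x ^ 2
      ≤ (((k : ℝ) - 1) / k) * (((n : ℝ) - k + 1) / ((n : ℝ) - k + 2))) :
    ((n : ℝ) - k + 1) / k ≤ lineDeriv ℝ (fun y => esymm n k y / esymm n (k - 1) y) x 1 := by
  obtain ⟨j, rfl⟩ : ∃ j, k = j + 2 := ⟨k - 2, by omega⟩
  simp only [show j + 2 - 1 = j + 1 by omega, show j + 2 - 2 = j by omega] at hx hNM ⊢
  have hσ : 0 < esymm n (j + 1) x := esymm_pos_of_mem_Gamma hx le_rfl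
  rw [((hasLineDerivAt_esymm_succ n (j + 1) x).div (hasLineDerivAt_esymm_succ n j x)
    hσ.ne').lineDeriv, Nat.cast_sub (by omega), Nat.cast_sub (by omega)]
  push_cast at hNM ⊢
  have hnj : (0 : ℝ) < n - j := by
    have : (j : ℝ) + 2 ≤ n := by exact_mod_cast hkn
    linarith
  have hnj' : (n : ℝ) - (j + 2) + 2 ≠ 0 := by linarith
  calc ((n : ℝ) - (j + 2) + 1) / (j + 2)
      = (n - (j + 1))
          - (n - j) * ((j + 2 - 1) / (j + 2) * ((n - (j + 2) + 1) / (n - (j + 2) + 2))) := by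
        field_simp
        ring
    _ ≤ (n - (j + 1))
          - (n - j) * (esymm n (j + 2) x * esymm n j x / esymm n (j + 1) x ^ 2) := by
        gcongr
    _ = _ := by field_simp

theorem lineDeriv_esymm_div_nonpos {n k ℓ : ℕ} {x : Fin n → ℝ} (hk : 2 ≤ k) (hkn : k ≤ n)
    (hx : x ∈ Gamma n (k - 1)) (hℓ : ℓ ≤ k - 2)
    (hNM : 1 ≤ ℓ → esymm n (k - 1) x * esymm n (ℓ - 1) x / (esymm n ℓ x * esymm n (k - 2) x)
      ≤ ((n : ℝ) - k + 2) / ((n : ℝ) - ℓ + 1)) :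
    lineDeriv ℝ (fun y => esymm n ℓ y / esymm n (k - 1) y) x 1 ≤ 0 := by
  obtain ⟨j, rfl⟩ : ∃ j, k = j + 2 := ⟨k - 2, by omega⟩
  simp only [show j + 2 - 1 = j + 1 by omega, show j + 2 - 2 = j by omega] at hx hℓ hNM ⊢
  have hσ : 0 < esymm n (j + 1) x := esymm_pos_of_mem_Gamma hx le_rfl
  have hσj : 0 < esymm n j x := esymm_pos_of_mem_Gamma hx (by omega)
  have hkn : (j : ℝ) + 2 ≤ n := by exact_mod_cast hkn
  have hD := hasLineDerivAt_esymm_succ n j x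
  rcases ℓ with _ | i
  · rw [((hasLineDerivAt_esymm_zero n x 1).div hD hσ.ne').lineDeriv, esymm_zero]
    apply div_nonpos_of_nonpos_of_nonneg _ (sq_nonneg _)
    nlinarith [(Nat.cast_nonneg (n - j) : (0 : ℝ) ≤ _)]
  · rw [((hasLineDerivAt_esymm_succ n i x).div hD hσ.ne').lineDeriv]
    apply div_nonpos_of_nonpos_of_nonneg _ (sq_nonneg _)
    have hσi : 0 < esymm n (i + 1) x := esymm_pos_of_mem_Gamma hx (by omega)
    have hi : (i : ℝ) + 1 ≤ j := by exact_mod_cast hℓ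
    have := hNM (by omega)
    simp only [Nat.add_sub_cancel] at this
    rw [div_le_div_iff₀ (by positivity) (by push_cast; linarith)] at this
    rw [Nat.cast_sub (by omega), Nat.cast_sub (by omega)]
    push_cast at this
    linarith

/-- for λ ∈ Γ_{k-1}, assuming the Newton–Maclaurin inequalities, the trace sum
Σ_i G^{ii} of the linearized operator of G = σ_k/σ_{k-1} − Σ α_ℓ σ_ℓ/σ_{k-1} (with α_ℓ ≥ 0)
satisfies Σ_i G^{ii} ≥ (n−k+1)/k. -/
theorem stmt_9 (n k : ℕ) (hk : 2 ≤ k) (hkn : k ≤ n) (α : ℕ → ℝ)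
    (hα : ∀ ℓ, ℓ ≤ k - 2 → 0 ≤ α ℓ) (x : Fin n → ℝ) (hx : x ∈ Gamma n (k-1))
    (hNM1 : esymm n k x * esymm n (k-2) x / esymm n (k-1) x ^ 2
      ≤ (((k:ℝ)-1)/(k:ℝ)) * (((n:ℝ)-(k:ℝ)+1)/((n:ℝ)-(k:ℝ)+2)))
    (hNM2 : ∀ ℓ : ℕ, 1 ≤ ℓ → ℓ ≤ k - 2 →
      esymm n (k-1) x * esymm n (ℓ-1) x / (esymm n ℓ x * esymm n (k-2) x)
        ≤ ((n:ℝ)-(k:ℝ)+2)/((n:ℝ)-(ℓ:ℝ)+1)) :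
    ((n:ℝ)-(k:ℝ)+1)/(k:ℝ)
      ≤ ∑ i : Fin n, fderiv ℝ (fun y => esymm n k y / esymm n (k-1) y
            - ∑ ℓ ∈ Finset.range (k-1), α ℓ * (esymm n ℓ y / esymm n (k-1) y))
          x (Pi.single i 1) := by
  have hσ : 0 < esymm n (k - 1) x := esymm_pos_of_mem_Gamma hx le_rfl
  have hq : ∀ m, DifferentiableAt ℝ (fun y => esymm n m y / esymm n (k - 1) y) x := fun m => by
    fun_prop (disch := exact hσ.ne')
  have hG := (hq k).hasFDerivAt.fun_sub
    (HasFDerivAt.fun_sum (u := range (k - 1)) fun ℓ _ => (hq ℓ).hasFDerivAt.const_mul (α ℓ))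
  rw [sum_apply_pi_single_one, hG.fderiv]
  simp only [sub_apply, FunLike.coe_sum, Finset.sum_apply,
    smul_apply, smul_eq_mul, ← (hq _).lineDeriv_eq_fderiv]
  have hcorr : ∑ ℓ ∈ range (k - 1),
      α ℓ * lineDeriv ℝ (fun y => esymm n ℓ y / esymm n (k - 1) y) x 1 ≤ 0 :=
    sum_nonpos fun ℓ hℓ => by
      have hℓ : ℓ ≤ k - 2 := by rw [mem_range] at hℓ; omega
      exact mul_nonpos_of_nonneg_of_nonpos (hα ℓ hℓ)
        (lineDeriv_esymm_div_nonpos hk hkn hx hℓ (hNM2 ℓ · hℓ))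
  linarith [le_lineDeriv_esymm_div hk hkn hx hNM1]
end
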